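/- Let n ≥ 2. The number of non-trivial right triangles in F_q^n, i.e., 3-element subsets {x1, x2, x3} of distinct vectors with (x_{σ(2)} - x_{σ(1)})·(x_{σ(3)} - x_{σ(1)}) = 0 for some permutation σ of {1,2,3}, is Θ(q^{3n-1}) as q → ∞ (with implied constants independent of q and n). -/

import Mathlib

open Matrix

/-- A non-trivial right triangle: a 3-element set `{x₁,x₂,x₃}` of vectors such that, for some
ordering, the two edge vectors at one vertex are orthogonal. -/
def IsRightTriangle {𝔽 : Type} [Field 𝔽] [DecidableEq 𝔽] {n : ℕ} (s : Finset (Fin n → 𝔽)) : Prop :=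
  s.card = 3 ∧ ∃ x y z : Fin n → 𝔽, s = {x, y, z} ∧ (y - x) ⬝ᵥ (z - x) = 0

/-!
Count ordered triples `(x, y, z)` with `(y - x) ⬝ᵥ (z - x) = 0`. Translating by `x`, they are `x`
together with an orthogonal pair `(u, v)`; for `u ≠ 0` the admissible `v` form a hyperplane, so
there are `q ^ n * (q ^ n + (q ^ n - 1) * q ^ (n - 1))`, about `q ^ (3n - 1)`, of them. Every right
triangle is the vertex set of such a triple, a 3-element set is the vertex set of at most `27`
triples, and triples with a repeated entry number at most `3 q ^ (2n)`, which is small against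
`q ^ (3n - 1)` once `q ^ (n - 1) ≥ 4`.
-/

open Finset

section Counting

variable {F : Type*} [Field F] [Fintype F] [DecidableEq F] {n : ℕ}

lemma card_filter_dotProduct_eq_zero {v : Fin n → F} (hv : v ≠ 0) :
    #{w | v ⬝ᵥ w = 0} = Fintype.card F ^ (n - 1) := by
  set f := dotProductEquiv F (Fin n) v
  have hf : f ≠ 0 := (LinearEquiv.map_ne_zero_iff _).mpr hv
  have hrank : Module.finrank F (LinearMap.ker f) = n - 1 := by
    have := f.finrank_ker_add_one_of_ne_zero hf
    rw [Module.finrank_fin_fun] at this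
    omega
  rw [← hrank, ← Nat.card_eq_fintype_card, ← Module.natCard_eq_pow_finrank, ← Fintype.card_subtype,
    ← Nat.card_eq_fintype_card]
  rfl

lemma card_orthogonal_pairs :
    #{p : (Fin n → F) × (Fin n → F) | p.1 ⬝ᵥ p.2 = 0} =
      Fintype.card F ^ n + (Fintype.card F ^ n - 1) * Fintype.card F ^ (n - 1) := by
  rw [card_filter, Fintype.sum_prod_type, ← add_sum_erase _ _ (mem_univ 0)]
  simp only [← card_filter]
  rw [sum_congr rfl fun u hu => card_filter_dotProduct_eq_zero (ne_of_mem_erase hu)]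
  simp [card_erase_of_mem]

variable (F n) in
def rightAngledTriples : Finset ((Fin n → F) × (Fin n → F) × (Fin n → F)) :=
  {p | (p.2.1 - p.1) ⬝ᵥ (p.2.2 - p.1) = 0}

lemma card_rightAngledTriples :
    #(rightAngledTriples F n) = Fintype.card F ^ n *
      #{p : (Fin n → F) × (Fin n → F) | p.1 ⬝ᵥ p.2 = 0} := by
  have hcard : Fintype.card F ^ n = #(univ : Finset (Fin n → F)) := by simp
  rw [hcard, ← card_product]
  refine card_nbij' (fun p => (p.1, p.2.1 - p.1, p.2.2 - p.1))
    (fun p => (p.1, p.1 + p.2.1, p.1 + p.2.2)) ?_ ?_ ?_ ?_ <;> rintro ⟨x, y, z⟩ <;>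
    simp [rightAngledTriples, -dotProduct_add, -dotProduct_sub]

lemma card_triples_with_repeat_le {α : Type*} [Fintype α] [DecidableEq α] :
    #{p : α × α × α | p.1 = p.2.1 ∨ p.1 = p.2.2 ∨ p.2.1 = p.2.2} ≤ 3 * Fintype.card α ^ 2 := by
  have h : ({p | p.1 = p.2.1 ∨ p.1 = p.2.2 ∨ p.2.1 = p.2.2} : Finset (α × α × α)) ⊆
      (univ.image fun q : α × α => (q.1, q.1, q.2)) ∪
        (univ.image fun q : α × α => (q.1, q.2, q.1)) ∪
        (univ.image fun q : α × α => (q.1, q.2, q.2)) := by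
    rintro ⟨x, y, z⟩ h
    simp only [mem_filter, mem_univ, true_and] at h
    rcases h with rfl | rfl | rfl <;> simp
  grw [card_le_card h, card_union_le, card_union_le, card_image_le, card_image_le, card_image_le]
  simp only [card_univ, Fintype.card_prod, ← sq]
  omega

lemma card_filter_insert_insert_singleton_eq_le {α : Type*} [DecidableEq α] (s : Finset (α × α × α))
    (t : Finset α) : #{p ∈ s | {p.1, p.2.1, p.2.2} = t} ≤ #t ^ 3 := by
  calc #{p ∈ s | {p.1, p.2.1, p.2.2} = t} ≤ #(t ×ˢ t ×ˢ t) := by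
        refine card_le_card fun p hp => ?_
        obtain ⟨-, rfl⟩ := mem_filter.mp hp
        simp
    _ = #t ^ 3 := by simp [card_product, pow_three]

end Counting

variable {F : Type} [Field F] [Fintype F] [DecidableEq F] {n : ℕ}

lemma card_rightTriangle_le_card_rightAngledTriples :
    Nat.card {s : Finset (Fin n → F) // IsRightTriangle s} ≤ #(rightAngledTriples F n) := by
  classical
  rw [Nat.card_eq_fintype_card, Fintype.card_subtype]
  refine (card_le_card fun s hs => ?_).trans
    (card_image_le (f := fun p : (Fin n → F) × (Fin n → F) × (Fin n → F) => {p.1, p.2.1, p.2.2}))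
  obtain ⟨-, x, y, z, rfl, h⟩ := (mem_filter.mp hs).2
  exact mem_image.mpr ⟨(x, y, z), by simpa [rightAngledTriples] using h, rfl⟩

lemma card_injective_rightAngledTriples_le :
    #{p ∈ rightAngledTriples F n | p.1 ≠ p.2.1 ∧ p.1 ≠ p.2.2 ∧ p.2.1 ≠ p.2.2} ≤
      27 * Nat.card {s : Finset (Fin n → F) // IsRightTriangle s} := by
  classical
  set D := {p ∈ rightAngledTriples F n | p.1 ≠ p.2.1 ∧ p.1 ≠ p.2.2 ∧ p.2.1 ≠ p.2.2}
  have himage : D.image (fun p => ({p.1, p.2.1, p.2.2} : Finset (Fin n → F))) ⊆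
      ({s | IsRightTriangle s} : Finset _) := by
    rintro _ hs
    obtain ⟨⟨x, y, z⟩, hp, rfl⟩ := mem_image.mp hs
    refine mem_filter.mpr ⟨mem_univ _, ?_⟩
    obtain ⟨hxyz, hxy, hxz, hyz⟩ := mem_filter.mp hp
    exact ⟨card_eq_three.mpr ⟨x, y, z, hxy, hxz, hyz, rfl⟩, x, y, z, rfl,
      (mem_filter.mp hxyz).2⟩
  rw [Nat.card_eq_fintype_card, Fintype.card_subtype]
  refine (card_le_mul_card_image D 27 fun t ht => ?_).trans
    (Nat.mul_le_mul_left _ (card_le_card himage))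
  obtain ⟨⟨x, y, z⟩, hp, rfl⟩ := mem_image.mp ht
  obtain ⟨-, hxy, hxz, hyz⟩ := mem_filter.mp hp
  calc _ ≤ #({x, y, z} : Finset (Fin n → F)) ^ 3 := card_filter_insert_insert_singleton_eq_le D _
    _ = 27 := by rw [card_eq_three.mpr ⟨x, y, z, hxy, hxz, hyz, rfl⟩]; rfl

lemma card_rightAngledTriples_le :
    #(rightAngledTriples F n) ≤
      27 * Nat.card {s : Finset (Fin n → F) // IsRightTriangle s} +
        3 * (Fintype.card F ^ n) ^ 2 := by
  rw [← card_filter_add_card_filter_not (fun p => p.1 ≠ p.2.1 ∧ p.1 ≠ p.2.2 ∧ p.2.1 ≠ p.2.2)]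
  refine add_le_add card_injective_rightAngledTriples_le ?_
  calc _ ≤ #{p : (Fin n → F) × (Fin n → F) × (Fin n → F) |
          p.1 = p.2.1 ∨ p.1 = p.2.2 ∨ p.2.1 = p.2.2} :=
        card_le_card fun p hp => by simp only [mem_filter, mem_univ, true_and] at hp ⊢; tauto
    _ ≤ 3 * (Fintype.card F ^ n) ^ 2 := by
      simpa using card_triples_with_repeat_le (α := Fin n → F)

lemma card_rightTriangle_le (hn : 1 ≤ n) :
    Nat.card {s : Finset (Fin n → F) // IsRightTriangle s} ≤ 2 * Fintype.card F ^ (3 * n - 1) := by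
  obtain ⟨m, rfl⟩ := Nat.exists_eq_add_of_le' hn
  have hexp : 3 * (m + 1) - 1 = 2 + 3 * m := by omega
  refine card_rightTriangle_le_card_rightAngledTriples.trans ?_
  rw [card_rightAngledTriples, card_orthogonal_pairs, hexp, add_tsub_cancel_right, pow_succ,
    pow_add, pow_mul']
  have hq : 1 ≤ Fintype.card F := Fintype.card_pos
  have ha : 1 ≤ Fintype.card F ^ m := Nat.one_le_pow _ _ hq
  generalize Fintype.card F = q at *
  generalize q ^ m = a at *
  calc a * q * (a * q + (a * q - 1) * a) ≤ a * q * (a * q + a * q * a) := by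
        gcongr; exact Nat.sub_le _ _
    _ = q ^ 2 * a ^ 2 * 1 + q ^ 2 * a ^ 3 := by ring
    _ ≤ q ^ 2 * a ^ 2 * a + q ^ 2 * a ^ 3 := by gcongr
    _ = 2 * (q ^ 2 * a ^ 3) := by ring

lemma pow_le_card_rightTriangle (h4 : 4 ≤ Fintype.card F ^ (n - 1)) :
    Fintype.card F ^ (3 * n - 1) ≤
      108 * Nat.card {s : Finset (Fin n → F) // IsRightTriangle s} := by
  obtain ⟨m, rfl⟩ : ∃ m, n = m + 1 := Nat.exists_eq_succ_of_ne_zero (by rintro rfl; simp at h4)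
  have hexp : 3 * (m + 1) - 1 = 2 + 3 * m := by omega
  have h := card_rightAngledTriples_le (F := F) (n := m + 1)
  rw [card_rightAngledTriples, card_orthogonal_pairs, add_tsub_cancel_right, pow_succ] at h
  rw [add_tsub_cancel_right] at h4
  rw [hexp, pow_add, pow_mul']
  have hq : 1 ≤ Fintype.card F := Fintype.card_pos
  generalize Nat.card {s : Finset (Fin (m + 1) → F) // IsRightTriangle s} = N at *
  generalize Fintype.card F = q at *
  generalize q ^ m = a at *
  have hfactor : a * q * a ≤ a * q + (a * q - 1) * a := by
    have hqa : 1 ≤ a * q := Nat.one_le_iff_ne_zero.mpr (by positivity)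
    zify [hqa]
    nlinarith
  have hT : q ^ 2 * a ^ 3 ≤ a * q * (a * q + (a * q - 1) * a) :=
    calc q ^ 2 * a ^ 3 = a * q * (a * q * a) := by ring
      _ ≤ _ := by gcongr
  have hsmall : 4 * (q ^ 2 * a ^ 2) ≤ q ^ 2 * a ^ 3 :=
    calc 4 * (q ^ 2 * a ^ 2) ≤ a * (q ^ 2 * a ^ 2) := by gcongr
      _ = q ^ 2 * a ^ 3 := by ring
  linarith

/-- For `n ≥ 2`, the number of non-trivial right triangles in `𝔽_q^n` is `Θ(q^(3n-1))` as
`q → ∞`, with implied constants independent of `q` and `n`. -/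
theorem stmt_9 :
    ∃ c C : ℝ, 0 < c ∧ 0 < C ∧ ∃ Q : ℕ, ∀ (𝔽 : Type) [Field 𝔽] [Fintype 𝔽] [DecidableEq 𝔽]
      (q n : ℕ), q = Fintype.card 𝔽 → Q ≤ q → 2 ≤ n →
        c * (q : ℝ) ^ (3 * n - 1) ≤
            (Nat.card {s : Finset (Fin n → 𝔽) // IsRightTriangle s} : ℝ) ∧
          (Nat.card {s : Finset (Fin n → 𝔽) // IsRightTriangle s} : ℝ) ≤
            C * (q : ℝ) ^ (3 * n - 1) := by
  refine ⟨1 / 108, 2, by norm_num, by norm_num, 4, fun 𝔽 _ _ _ q n hq hQ hn => ?_⟩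
  subst hq
  have hpow : 4 ≤ Fintype.card 𝔽 ^ (n - 1) := hQ.trans (Nat.le_self_pow (by omega) _)
  have hlower : ((Fintype.card 𝔽 ^ (3 * n - 1) : ℕ) : ℝ) ≤
      ((108 * Nat.card {s : Finset (Fin n → 𝔽) // IsRightTriangle s} : ℕ) : ℝ) :=
    Nat.cast_le.mpr (pow_le_card_rightTriangle hpow)
  have hupper : ((Nat.card {s : Finset (Fin n → 𝔽) // IsRightTriangle s} : ℕ) : ℝ) ≤
      ((2 * Fintype.card 𝔽 ^ (3 * n - 1) : ℕ) : ℝ) :=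
    Nat.cast_le.mpr (card_rightTriangle_le (by omega))
  push_cast at hlower hupper
  constructor <;> linarith
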